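/- arXiv:math/0202071 — 2 statements merged into one kernel-verified Lean document; each statement's English description precedes it below -/
import Mathlib

section
/- For every n ≥ 1 and every transdiagonal vector ε ∈ ℕ^n, the polynomial G_ε belongs to the ideal J_n. -/
open MvPolynomial

/-- The composition `c(ν)` obtained from a vector `ν ∈ ℕ^n` by deleting its zero
entries. -/
def vecComp {n : ℕ} (ν : Fin n →₀ ℕ) : List ℕ :=
  (List.ofFn fun i => ν i).filter (· != 0)

/-- A polynomial is quasi-symmetric if monomials whose exponent vectors have the same
underlying composition have equal coefficients. -/
def IsQuasiSymmetric {n : ℕ} (P : MvPolynomial (Fin n) ℚ) : Prop :=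
  ∀ ν μ : Fin n →₀ ℕ, vecComp ν = vecComp μ → coeff ν P = coeff μ P

/-- The ideal `J_n` generated by all quasi-symmetric polynomials with zero constant
term. -/
noncomputable def Jideal (n : ℕ) : Ideal (MvPolynomial (Fin n) ℚ) :=
  Ideal.span {P | IsQuasiSymmetric P ∧ constantCoeff P = 0}

/-- A vector `ν ∈ ℕ^n` is Dyck if `ν 0 + ⋯ + ν j ≤ j` for every `j` (0-indexed); in
1-indexed terms, `ν_1 + ⋯ + ν_ℓ ≤ ℓ - 1` for every `1 ≤ ℓ ≤ n`. -/
def IsDyck {n : ℕ} (ν : Fin n →₀ ℕ) : Prop :=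
  ∀ j : Fin n, ∑ i ∈ Finset.Iic j, ν i ≤ (j : ℕ)

/-- A vector `ν ∈ ℕ^n` is transdiagonal if `ν_1 + ⋯ + ν_ℓ ≥ ℓ` for some `1 ≤ ℓ ≤ n`. -/
def IsTransdiagonal {n : ℕ} (ν : Fin n →₀ ℕ) : Prop :=
  ∃ j : Fin n, (j : ℕ) < ∑ i ∈ Finset.Iic j, ν i

/-- A word is transdiagonal if `ν_1 + ⋯ + ν_k ≥ k` for some `1 ≤ k ≤ length`. -/
def IsTransdiagonalL (l : List ℕ) : Prop :=
  ∃ k, 1 ≤ k ∧ k ≤ l.length ∧ k ≤ (l.take k).sum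

/-- A composition: a (possibly empty) list of positive integers. -/
def IsComposition (α : List ℕ) : Prop := ∀ a ∈ α, 0 < a

/-- The monomial quasi-symmetric polynomial `M_α` in the ordered list of variables `v`:
the sum of `v_{s 1}^{α_1} ⋯ v_{s k}^{α_k}` over strictly increasing position choices
`s`. It is `0` when `α` has more than `length v` parts, and `1` when `α` is empty. -/
noncomputable def Mqs (n : ℕ) (v : List (Fin n)) (α : List ℕ) : MvPolynomial (Fin n) ℚ :=
  ∑ s ∈ (Finset.powersetCard α.length (Finset.univ : Finset (Fin v.length))).attach,
    ∏ i : Fin α.length,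
      X (v.get (s.1.orderEmbOfFin (Finset.mem_powersetCard_univ.mp s.2) i)) ^ α.get i

/-- The set `D(α)` of partial sums of a composition (excluding the total sum). -/
def Dset (α : List ℕ) : Finset ℕ :=
  ((List.range (α.length - 1)).map fun i => (α.take (i + 1)).sum).toFinset

/-- The composition `α_d(S)` of `d` whose partial-sum set is `S ⊆ {1,…,d-1}`:
successive differences of the sorted elements of `S` together with `d`. -/
def compOfD (d : ℕ) (S : Finset ℕ) : List ℕ :=
  (List.zipWith (fun x y => x - y) (S.sort (· ≤ ·) ++ [d]) (0 :: S.sort (· ≤ ·))).filter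
    (· != 0)

/-- The fundamental quasi-symmetric polynomial `F_α = ∑_{β ⪰ α} M_β` in the ordered
list of variables `v`; the sum is over the compositions `β` of `|α|` refining `α`,
encoded by the subsets of `{1, …, |α|-1}` containing `D(α)`. -/
noncomputable def FqsIn (n : ℕ) (v : List (Fin n)) (α : List ℕ) :
    MvPolynomial (Fin n) ℚ :=
  ∑ S ∈ (Finset.Icc 1 (α.sum - 1)).powerset.filter (fun S => Dset α ⊆ S),
    Mqs n v (compOfD α.sum S)

/-- The fundamental quasi-symmetric polynomial `F_α` in the variables `x_1, …, x_n`. -/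
noncomputable def Fqsym (n : ℕ) (α : List ℕ) : MvPolynomial (Fin n) ℚ :=
  FqsIn n (List.finRange n) α

/-- Strip the trailing zeros of a word. -/
def stripZeros (l : List ℕ) : List ℕ := (l.reverse.dropWhile (· == 0)).reverse

/-- The recursion defining the family `G`, with a fuel parameter.  Writing the word as
`w0aβ0^*` (with the displayed `0` the last zero before the final nonzero letter, `a ≥ 1`
and `β` a composition), one has `G_{w0aβ0^*} = G_{waβ0^*} - x_k G_{w(a-1)β0^*}` where
`k - 1 = length w`; if the word is `α0^*` with `α` a composition, `G_{α0^*} = F_α`.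
The fuel is an upper bound for the position of the last nonzero letter; it is never
exhausted when the initial fuel is at least `(stripZeros l).length`, since this length
strictly decreases along the recursion, so `Gaux n (stripZeros l).length l` (and a
fortiori `Gaux n n l` for words of length `n`) computes `G` faithfully. -/
noncomputable def Gaux (n : ℕ) : ℕ → List ℕ → MvPolynomial (Fin n) ℚ
  | 0, l => Fqsym n (stripZeros l)
  | fuel + 1, l =>
    let c := stripZeros l
    if c.all (· != 0) then Fqsym n c
    else
      let z := l.length - c.length
      let s := c.reverse
      let aβ := (s.takeWhile (· != 0)).reverse
      let w := ((s.dropWhile (· != 0)).reverse).dropLast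
      let a := aβ.headI
      let β := aβ.tail
      Gaux n fuel (w ++ a :: (β ++ List.replicate (z + 1) 0)) -
        (if h : w.length < n then X (⟨w.length, h⟩ : Fin n) else 0) *
          Gaux n fuel (w ++ (a - 1) :: (β ++ List.replicate (z + 1) 0))

/-- The polynomial `G_ε` for `ε ∈ ℕ^n`. -/
noncomputable def Gpoly {n : ℕ} (ε : Fin n →₀ ℕ) : MvPolynomial (Fin n) ℚ :=
  Gaux n n (List.ofFn fun i => ε i)

/-- Graded lexicographic order on exponent vectors: `ν < μ` iff `|ν| < |μ|`, or
`|ν| = |μ|` and the first nonzero entry of `μ - ν` is positive. -/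
def grlexLt {n : ℕ} (ν μ : Fin n →₀ ℕ) : Prop :=
  (∑ i, ν i) < (∑ i, μ i) ∨
    ((∑ i, ν i) = (∑ i, μ i) ∧ ∃ i : Fin n, (∀ j, j < i → ν j = μ j) ∧ ν i < μ i)

/-- The list of all shuffles of two words. -/
def shuffles : List ℕ → List ℕ → List (List ℕ)
  | [], v => [v]
  | u, [] => [u]
  | a :: u, b :: v =>
      (shuffles u (b :: v)).map (a :: ·) ++ (shuffles (a :: u) v).map (b :: ·)
termination_by u v => u.length + v.length

/-- The descent set `𝒟(u) = {i : u_i > u_{i+1}}` (1-indexed positions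
`1 ≤ i ≤ length u - 1`). -/
def descents (u : List ℕ) : Finset ℕ :=
  (Finset.Icc 1 (u.length - 1)).filter fun i => u.getD i 0 < u.getD (i - 1) 0

/-- The constant-coefficient differential operator `P(∂)` obtained from `P` by
substituting `∂/∂x_i` for each variable `x_i`. -/
noncomputable def diffOp (n : ℕ) (P : MvPolynomial (Fin n) ℚ) :
    Module.End ℚ (MvPolynomial (Fin n) ℚ) :=
  ∑ ν ∈ P.support, P.coeff ν •
    (List.finRange n).foldr (fun i f => ((pderiv i).toLinearMap) ^ (ν i) * f) 1

/-- The pairing `⟨P, Q⟩ = (P(∂) Q)(0)`, as a linear map in `Q`. -/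
noncomputable def pairingLM (n : ℕ) (P : MvPolynomial (Fin n) ℚ) :
    MvPolynomial (Fin n) ℚ →ₗ[ℚ] ℚ :=
  ((aeval (fun _ : Fin n => (0 : ℚ))).toLinearMap).comp (diffOp n P)

/-- The orthogonal complement `K^⊥` of an ideal `K` with respect to the pairing
`⟨P, Q⟩ = (P(∂) Q)(0)`. -/
noncomputable def perp (n : ℕ) (K : Ideal (MvPolynomial (Fin n) ℚ)) :
    Submodule ℚ (MvPolynomial (Fin n) ℚ) :=
  ⨅ P ∈ (K : Set (MvPolynomial (Fin n) ℚ)), LinearMap.ker (pairingLM n P)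

/-- The space `SH_n = J_n^⊥` of super-covariant polynomials. -/
noncomputable def SHspace (n : ℕ) : Submodule ℚ (MvPolynomial (Fin n) ℚ) :=
  perp n (Jideal n)

/-- The ideal `I_n` generated by all symmetric polynomials with zero constant term. -/
noncomputable def Iideal (n : ℕ) : Ideal (MvPolynomial (Fin n) ℚ) :=
  Ideal.span {P | P.IsSymmetric ∧ constantCoeff P = 0}

/-- The generating series `S = ∑_{n ≥ 1} ∑_{k=0}^{n-1} ((n-k)/(n+k))·C(n+k,k) t^k x^n`
in `ℚ[[t,x]]`, where `t` is the variable of index `0` and `x` that of index `1`. -/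
noncomputable def Sgen : MvPowerSeries (Fin 2) ℚ :=
  fun d =>
    if d 0 < d 1 then
      (((d 1 - d 0) * (d 1 + d 0).choose (d 0) : ℕ) : ℚ) / ((d 1 + d 0 : ℕ) : ℚ)
    else 0
section AuxCoeff

variable {n k : ℕ}

lemma sumSingle_apply (e : Fin k → Fin n) (he : Function.Injective e)
    (g : Fin k → ℕ) (j : Fin k) :
    (∑ i, Finsupp.single (e i) (g i)) (e j) = g j := by
  rw [Finsupp.finset_sum_apply]
  rw [Finset.sum_eq_single j (fun i _ hij => by
      rw [Finsupp.single_apply, if_neg (fun h => hij (he h))]) (by simp)]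
  simp

lemma sumSingle_apply_ne (e : Fin k → Fin n) (g : Fin k → ℕ)
    {x : Fin n} (hx : ∀ i, e i ≠ x) :
    (∑ i, Finsupp.single (e i) (g i)) x = 0 := by
  rw [Finsupp.finset_sum_apply]
  exact Finset.sum_eq_zero fun i _ => by rw [Finsupp.single_apply, if_neg (hx i)]

lemma filter_finRange_eq (e : Fin k → Fin n) (he : StrictMono e)
    (ν : Fin n →₀ ℕ) (hsupp : ∀ x, ν x ≠ 0 ↔ ∃ j, e j = x) :
    (List.finRange n).filter (fun x => ν x != 0) = (List.finRange k).map e := by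
  apply (fun h1 h2 h3 => List.Perm.eq_of_pairwise' (r := fun a b : Fin n => a ≤ b) h2 h3 h1)
  · apply List.perm_of_nodup_nodup_toFinset_eq
    · exact (List.nodup_finRange n).filter _
    · exact (List.nodup_finRange k).map he.injective
    · ext x
      simp only [List.mem_toFinset, List.mem_filter, List.mem_finRange, true_and,
        List.mem_map, bne_iff_ne, ne_eq]
      rw [← hsupp x]
  · exact List.Pairwise.imp le_of_lt ((List.pairwise_lt_finRange n).filter _)
  · exact List.Pairwise.map e (fun a b hab => le_of_lt (he hab))
      (List.pairwise_lt_finRange k)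

lemma vecComp_eq_of (e : Fin k → Fin n) (he : StrictMono e) (ν : Fin n →₀ ℕ)
    (hsupp : ∀ x, ν x ≠ 0 ↔ ∃ j, e j = x) :
    vecComp ν = List.ofFn (fun j => ν (e j)) := by
  unfold vecComp
  rw [List.ofFn_eq_map, List.ofFn_eq_map, List.filter_map,
    show ((· != 0) ∘ fun i => ν i) = (fun x => ν x != 0) from rfl,
    filter_finRange_eq e he ν hsupp, List.map_map]
  rfl

lemma vecComp_sumSingle (e : Fin k → Fin n) (he : StrictMono e)
    (g : Fin k → ℕ) (hg : ∀ j, g j ≠ 0) :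
    vecComp (∑ i, Finsupp.single (e i) (g i)) = List.ofFn g := by
  have hsupp : ∀ x, (∑ i, Finsupp.single (e i) (g i)) x ≠ 0 ↔ ∃ j, e j = x := by
    intro x; constructor
    · intro hx; by_contra h; push_neg at h; exact hx (sumSingle_apply_ne e g h)
    · rintro ⟨j, rfl⟩; rw [sumSingle_apply e he.injective]; exact hg j
  rw [vecComp_eq_of e he _ hsupp]
  congr 1; funext j; rw [sumSingle_apply e he.injective]

lemma prod_monomial_one {ι : Type*} (t : Finset ι) (d : ι → (Fin n →₀ ℕ)) :
    (∏ i ∈ t, (monomial (d i) (1 : ℚ))) = monomial (∑ i ∈ t, d i) 1 := by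
  induction t using Finset.cons_induction with
  | empty => simp
  | cons a t ha ih => rw [Finset.prod_cons, Finset.sum_cons, ih, monomial_mul, one_mul]

lemma prod_X_pow (f : Fin k → Fin n) (g : Fin k → ℕ) :
    (∏ i, (X (f i) : MvPolynomial (Fin n) ℚ) ^ g i) =
      monomial (∑ i, Finsupp.single (f i) (g i)) 1 := by
  rw [← prod_monomial_one]
  exact Finset.prod_congr rfl fun i _ => X_pow_eq_monomial

end AuxCoeff

set_option maxRecDepth 10000

def Efun {n : ℕ} (γ : List ℕ)
    (s : {x // x ∈ Finset.powersetCard γ.length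
      (Finset.univ : Finset (Fin (List.finRange n).length))}) : Fin γ.length → Fin n :=
  fun i => (List.finRange n).get (s.1.orderEmbOfFin (Finset.mem_powersetCard_univ.mp s.2) i)

lemma Mqs_eq (n : ℕ) (γ : List ℕ) :
    Mqs n (List.finRange n) γ =
      ∑ s ∈ (Finset.powersetCard γ.length
          (Finset.univ : Finset (Fin (List.finRange n).length))).attach,
        monomial (∑ i, Finsupp.single (Efun γ s i) (γ.get i)) (1:ℚ) := by
  unfold Mqs
  apply Finset.sum_congr rfl
  intro s _
  exact prod_X_pow (Efun γ s) (fun i => γ.get i)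

lemma hget_finRange (n : ℕ) : ∀ j : Fin (List.finRange n).length,
    (List.finRange n).get j = Fin.cast (List.length_finRange (n := n)) j := by
  rintro ⟨i, h⟩; rw [List.get_finRange]

lemma Efun_strictMono {n : ℕ} (γ : List ℕ)
    (s : {x // x ∈ Finset.powersetCard γ.length
      (Finset.univ : Finset (Fin (List.finRange n).length))}) : StrictMono (Efun γ s) := by
  intro i j hij
  unfold Efun
  simp only [hget_finRange]
  exact Fin.cast_strictMono _
    ((s.1.orderEmbOfFin (Finset.mem_powersetCard_univ.mp s.2)).strictMono hij)

lemma coeff_Mqs (n : ℕ) (γ : List ℕ) (hγ : ∀ a ∈ γ, a ≠ 0) (ν : Fin n →₀ ℕ) :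
    coeff ν (Mqs n (List.finRange n) γ) = if vecComp ν = γ then 1 else 0 := by
  have hNn : (List.finRange n).length = n := List.length_finRange (n := n)
  have hg : ∀ j : Fin γ.length, γ.get j ≠ 0 := fun j => hγ _ (List.get_mem γ j)
  rw [Mqs_eq, MvPolynomial.coeff_sum]
  simp only [coeff_monomial]
  by_cases hc : vecComp ν = γ
  case neg =>
    rw [if_neg hc]
    apply Finset.sum_eq_zero
    intro s _
    rw [if_neg]
    intro hD
    apply hc
    rw [← hD, vecComp_sumSingle _ (Efun_strictMono γ s) _ hg, List.ofFn_get]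
  case pos =>
    rw [if_pos hc]
    set L := (List.finRange n).filter (fun x => ν x != 0) with hLdef
    have hvc : vecComp ν = L.map ν := by
      unfold vecComp
      rw [List.ofFn_eq_map, List.filter_map]
      rfl
    have hLlen : L.length = γ.length := by
      have h2 := congrArg List.length (hvc.symm.trans hc)
      rwa [List.length_map] at h2
    have hLsorted : L.Pairwise (· < ·) := (List.pairwise_lt_finRange n).filter _
    set e : Fin γ.length → Fin n := fun j => L.get (Fin.cast hLlen.symm j) with hedef
    have he : StrictMono e := by
      intro i j hij
      exact List.pairwise_iff_get.mp hLsorted _ _ hij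
    have hνe : ∀ j : Fin γ.length, ν (e j) = γ.get j := by
      intro j
      have h1 := List.get_of_eq (hc.symm.trans hvc) j
      rw [h1, List.get_eq_getElem, List.getElem_map]
      rfl
    have hmemiff : ∀ x, ν x ≠ 0 ↔ ∃ j, e j = x := by
      intro x
      have hxL : ν x ≠ 0 ↔ x ∈ L := by
        rw [hLdef, List.mem_filter]
        simp only [List.mem_finRange, true_and, bne_iff_ne, ne_eq]
      rw [hxL, List.mem_iff_get]
      constructor
      · rintro ⟨idx, rfl⟩
        exact ⟨⟨idx, by rw [← hLlen]; exact idx.2⟩, rfl⟩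
      · rintro ⟨j, rfl⟩
        exact ⟨_, rfl⟩
    have hνeq : ν = ∑ j, Finsupp.single (e j) (γ.get j) := by
      ext x
      by_cases hx : ∃ j, e j = x
      · obtain ⟨j, rfl⟩ := hx
        rw [sumSingle_apply e he.injective, hνe]
      · push_neg at hx
        rw [sumSingle_apply_ne e _ hx]
        by_contra hne
        obtain ⟨j, hj⟩ := (hmemiff x).mp hne
        exact hx j hj
    have hsupp_eq : ν.support = L.toFinset := by
      ext x
      rw [Finsupp.mem_support_iff, List.mem_toFinset, hLdef, List.mem_filter]
      simp only [List.mem_finRange, true_and, bne_iff_ne, ne_eq]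
    have hcard : ν.support.card = γ.length := by
      rw [hsupp_eq, List.toFinset_card_of_nodup ((List.nodup_finRange n).filter _)]
      exact hLlen
    set s₀ : Finset (Fin (List.finRange n).length) :=
      ν.support.map ⟨Fin.cast hNn.symm, Fin.cast_injective hNn.symm⟩ with hs₀def
    have hs₀card : s₀.card = γ.length := by rw [hs₀def, Finset.card_map, hcard]
    have hs₀mem : s₀ ∈ Finset.powersetCard γ.length
        (Finset.univ : Finset (Fin (List.finRange n).length)) :=
      Finset.mem_powersetCard_univ.mpr hs₀card
    rw [Finset.sum_eq_single_of_mem ⟨s₀, hs₀mem⟩ (Finset.mem_attach _ _) ?side]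
    case side =>
      intro b _ hb
      rw [if_neg]
      intro hD
      apply hb
      apply Subtype.ext
      have hbmono := Efun_strictMono γ b
      ext y
      have hy1 : y ∈ b.1 ↔ ∃ i, b.1.orderEmbOfFin (Finset.mem_powersetCard_univ.mp b.2) i = y := by
        constructor
        · intro hy
          have h2 : y ∈ Set.range ⇑(b.1.orderEmbOfFin (Finset.mem_powersetCard_univ.mp b.2)) := by
            rw [Finset.range_orderEmbOfFin]; exact hy
          exact h2
        · rintro ⟨i, rfl⟩; exact Finset.orderEmbOfFin_mem _ _ _
      have hy2 : y ∈ s₀ ↔ ν (Fin.cast hNn y) ≠ 0 := by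
        rw [hs₀def, Finset.mem_map]
        constructor
        · rintro ⟨x, hx, rfl⟩
          have hxx : Fin.cast hNn (Fin.cast hNn.symm x) = x := Fin.ext rfl
          rw [show ((⟨Fin.cast hNn.symm, Fin.cast_injective hNn.symm⟩ :
            Fin n ↪ Fin (List.finRange n).length) x) = Fin.cast hNn.symm x from rfl, hxx]
          exact Finsupp.mem_support_iff.mp hx
        · intro h
          exact ⟨Fin.cast hNn y, Finsupp.mem_support_iff.mpr h, Fin.ext rfl⟩
      rw [hy1, hy2, ← hD]
      have hEcast : ∀ i, Efun γ b i = Fin.cast hNn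
          (b.1.orderEmbOfFin (Finset.mem_powersetCard_univ.mp b.2) i) := by
        intro i; unfold Efun; rw [hget_finRange]
      constructor
      · rintro ⟨i, rfl⟩
        have : Fin.cast hNn (b.1.orderEmbOfFin (Finset.mem_powersetCard_univ.mp b.2) i)
            = Efun γ b i := (hEcast i).symm
        rw [this, sumSingle_apply _ hbmono.injective]
        exact hg i
      · intro hne
        by_contra hnex
        push_neg at hnex
        apply hne
        apply sumSingle_apply_ne
        intro i hi
        apply hnex i
        rw [hEcast i] at hi
        exact Fin.cast_injective hNn hi
    · rw [if_pos]
      have hf : (fun i : Fin γ.length => Fin.cast hNn.symm (e i)) =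
          ⇑(s₀.orderEmbOfFin (Finset.mem_powersetCard_univ.mp hs₀mem)) := by
        apply Finset.orderEmbOfFin_unique
        · intro i
          rw [hs₀def]
          apply Finset.mem_map_of_mem
          rw [Finsupp.mem_support_iff, hνe]
          exact hg i
        · exact (Fin.cast_strictMono hNn.symm).comp he
      have hE : Efun γ (⟨s₀, hs₀mem⟩ : {x // x ∈ Finset.powersetCard γ.length
          (Finset.univ : Finset (Fin (List.finRange n).length))}) = e := by
        funext i
        unfold Efun
        rw [hget_finRange, ← congrFun hf i]
        exact Fin.ext rfl
      rw [hE, ← hνeq]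

lemma compOfD_pos (d : ℕ) (S : Finset ℕ) : ∀ a ∈ compOfD d S, a ≠ 0 := by
  intro a ha
  have := List.mem_filter.mp ha
  simpa using this.2

lemma sum_filter_ne_zero (l : List ℕ) : (l.filter (· != 0)).sum = l.sum := by
  induction l with
  | nil => rfl
  | cons a t ih =>
    by_cases h : a = 0
    · simp [h, List.filter_cons, ih]
    · simp [h, List.filter_cons, ih]

lemma zip_sub_sum : ∀ (L : List ℕ) (x0 d : ℕ),
    d - x0 ≤ (List.zipWith (fun x y => x - y) (L ++ [d]) (x0 :: L)).sum := by
  intro L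
  induction L with
  | nil => intro x0 d; simp
  | cons y L ih =>
    intro x0 d
    simp only [List.cons_append, List.zipWith_cons_cons, List.sum_cons]
    have := ih y d
    omega

lemma compOfD_sum (d : ℕ) (S : Finset ℕ) : d ≤ (compOfD d S).sum := by
  unfold compOfD
  rw [sum_filter_ne_zero]
  simpa using zip_sub_sum (S.sort (· ≤ ·)) 0 d

lemma compOfD_ne_nil (d : ℕ) (hd : d ≠ 0) (S : Finset ℕ) : compOfD d S ≠ [] := by
  intro h
  have := compOfD_sum d S
  rw [h] at this
  simp at this
  omega

lemma vecComp_zero (n : ℕ) : vecComp (0 : Fin n →₀ ℕ) = [] := by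
  unfold vecComp
  have : (List.ofFn fun i : Fin n => (0 : Fin n →₀ ℕ) i) = List.replicate n 0 := by
    simp [List.ofFn_const]
  rw [this]
  simp

lemma isQuasiSymmetric_Fqsym (n : ℕ) (α : List ℕ) : IsQuasiSymmetric (Fqsym n α) := by
  intro ν μ h
  unfold Fqsym FqsIn
  rw [MvPolynomial.coeff_sum, MvPolynomial.coeff_sum]
  apply Finset.sum_congr rfl
  intro S _
  rw [coeff_Mqs _ _ (compOfD_pos _ S) ν, coeff_Mqs _ _ (compOfD_pos _ S) μ, h]

lemma constantCoeff_Fqsym (n : ℕ) (α : List ℕ) (hα : α.sum ≠ 0) :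
    constantCoeff (Fqsym n α) = 0 := by
  unfold Fqsym FqsIn
  rw [map_sum]
  apply Finset.sum_eq_zero
  intro S _
  rw [show (constantCoeff (Mqs n (List.finRange n) (compOfD α.sum S)) : ℚ)
      = coeff 0 (Mqs n (List.finRange n) (compOfD α.sum S)) from rfl]
  rw [coeff_Mqs _ _ (compOfD_pos _ S) 0, vecComp_zero, if_neg]
  exact fun h => compOfD_ne_nil _ hα S h.symm

lemma Fqsym_mem_Jideal (n : ℕ) (α : List ℕ) (hα : α.sum ≠ 0) : Fqsym n α ∈ Jideal n :=
  Ideal.subset_span ⟨isQuasiSymmetric_Fqsym n α, constantCoeff_Fqsym n α hα⟩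

lemma sum_take_append (w x : List ℕ) (k : ℕ) :
    (List.take k (w ++ x)).sum = (List.take k w).sum + (List.take (k - w.length) x).sum := by
  rw [List.take_append, List.sum_append]

lemma sum_take_le (l : List ℕ) (k : ℕ) : (List.take k l).sum ≤ l.sum := by
  conv_rhs => rw [← List.take_append_drop k l]
  rw [List.sum_append]
  omega

lemma transL_sum_pos (l : List ℕ) (h : IsTransdiagonalL l) : l.sum ≠ 0 := by
  obtain ⟨k, hk1, _, hk3⟩ := h
  have := sum_take_le l k
  omega

lemma transL_append_replicate (u : List ℕ) (z : ℕ) :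
    IsTransdiagonalL (u ++ List.replicate z 0) ↔ IsTransdiagonalL u := by
  constructor
  · rintro ⟨k, hk1, hk2, hk3⟩
    rw [sum_take_append] at hk3
    have hz : (List.take (k - u.length) (List.replicate z 0)).sum = 0 := by
      rw [List.take_replicate]
      simp
    by_cases hku : k ≤ u.length
    · exact ⟨k, hk1, hku, by omega⟩
    · push_neg at hku
      rw [List.take_of_length_le (by omega : u.length ≤ k)] at hk3
      have hlen : 1 ≤ u.length := by
        rcases u with _ | ⟨a, t⟩
        · simp at hk3; omega
        · simp
      refine ⟨u.length, hlen, le_rfl, ?_⟩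
      rw [List.take_of_length_le le_rfl]
      omega
  · rintro ⟨k, hk1, hk2, hk3⟩
    refine ⟨k, hk1, by rw [List.length_append]; omega, ?_⟩
    rw [sum_take_append]
    omega

lemma trans_step (w β : List ℕ) (a : ℕ) (ha : a ≠ 0)
    (h : IsTransdiagonalL (w ++ 0 :: a :: β)) :
    IsTransdiagonalL (w ++ a :: β) ∧ IsTransdiagonalL (w ++ (a - 1) :: β) := by
  obtain ⟨k, hk1, hk2, hk3⟩ := h
  rw [List.length_append] at hk2
  simp only [List.length_cons] at hk2
  rw [sum_take_append] at hk3
  by_cases hkw : k ≤ w.length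
  · have h0 : k - w.length = 0 := by omega
    rw [h0, List.take_zero, List.sum_nil] at hk3
    constructor <;>
      exact ⟨k, hk1, by rw [List.length_append]; simp; omega,
        by rw [sum_take_append, h0, List.take_zero, List.sum_nil]; omega⟩
  · push_neg at hkw
    have htkw : List.take k w = w := List.take_of_length_le (by omega)
    by_cases hkw1 : k = w.length + 1
    · -- prefix sum is w.sum + 0 ≥ w.length + 1
      have h1 : k - w.length = 1 := by omega
      rw [htkw, h1] at hk3
      simp only [List.take_succ_cons, List.take_zero, List.sum_cons, List.sum_nil] at hk3
      have hwlen : 1 ≤ w.length := by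
        by_contra hw
        push_neg at hw
        interval_cases hl : w.length
        · rcases w with _ | _
          · simp at hk3; omega
          · simp at hl
      have key : ∀ x : List ℕ, IsTransdiagonalL (w ++ x) := by
        intro x
        refine ⟨w.length, hwlen, by rw [List.length_append]; omega, ?_⟩
        rw [sum_take_append, List.take_of_length_le (le_rfl : w.length ≤ w.length)]
        simp only [Nat.sub_self, List.take_zero, List.sum_nil]
        omega
      exact ⟨key _, key _⟩
    · -- k ≥ w.length + 2
      obtain ⟨m, hm⟩ : ∃ m, k = w.length + 2 + m := ⟨k - w.length - 2, by omega⟩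
      have h2 : k - w.length = m + 2 := by omega
      rw [htkw, h2] at hk3
      simp only [List.take_succ_cons, List.sum_cons] at hk3
      -- hk3 : w.sum + (0 + (a + (take m β).sum)) ≥ k
      have hml : m ≤ β.length := by omega
      constructor
      · refine ⟨k - 1, by omega, by rw [List.length_append]; simp; omega, ?_⟩
        rw [sum_take_append, List.take_of_length_le (by omega : w.length ≤ k - 1)]
        have h3 : k - 1 - w.length = m + 1 := by omega
        rw [h3]
        simp only [List.take_succ_cons, List.sum_cons]
        omega
      · refine ⟨k - 1, by omega, by rw [List.length_append]; simp; omega, ?_⟩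
        rw [sum_take_append, List.take_of_length_le (by omega : w.length ≤ k - 1)]
        have h3 : k - 1 - w.length = m + 1 := by omega
        rw [h3]
        simp only [List.take_succ_cons, List.sum_cons]
        omega

lemma stripZeros_decomp (l : List ℕ) : ∃ z, l = stripZeros l ++ List.replicate z 0 := by
  refine ⟨(l.reverse.takeWhile (· == 0)).length, ?_⟩
  have key : l = (l.reverse.dropWhile (· == 0)).reverse ++ (l.reverse.takeWhile (· == 0)).reverse := by
    rw [← List.reverse_append, List.takeWhile_append_dropWhile, List.reverse_reverse]
  have hrep : (l.reverse.takeWhile (· == 0)).reverse =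
      List.replicate (l.reverse.takeWhile (· == 0)).length 0 := by
    have h1 : ∀ b ∈ (l.reverse.takeWhile (· == 0)).reverse, b = 0 := by
      intro b hb
      simpa using List.mem_takeWhile_imp (List.mem_reverse.mp hb)
    rw [List.eq_replicate_of_mem h1, List.length_reverse]
  rw [← hrep]
  exact key

lemma stripZeros_sum (l : List ℕ) : (stripZeros l).sum = l.sum := by
  obtain ⟨z, hz⟩ := stripZeros_decomp l
  conv_rhs => rw [hz]
  simp

lemma strip_decomp (c : List ℕ)
    (hhead : ∀ x, c.reverse.head? = some x → x ≠ 0)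
    (hall : c.all (· != 0) = false) :
    (c.reverse.takeWhile (· != 0)).reverse.headI ≠ 0 ∧
    c = ((c.reverse.dropWhile (· != 0)).reverse).dropLast ++
        0 :: ((c.reverse.takeWhile (· != 0)).reverse.headI ::
              (c.reverse.takeWhile (· != 0)).reverse.tail) := by
  have hcne : c ≠ [] := by
    intro h
    rw [h] at hall
    simp at hall
  have hsne : c.reverse ≠ [] := by
    intro h
    exact hcne (by simpa using congrArg List.reverse h)
  obtain ⟨h0, s', hs'⟩ := List.exists_cons_of_ne_nil hsne
  have hh0 : h0 ≠ 0 := hhead h0 (by rw [hs']; rfl)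
  have ht : c.reverse.takeWhile (· != 0) = h0 :: s'.takeWhile (· != 0) := by
    rw [hs']
    exact List.takeWhile_cons_of_pos (by simpa using hh0)
  have haβne : (c.reverse.takeWhile (· != 0)).reverse ≠ [] := by
    rw [ht]
    simp
  obtain ⟨a0, β0, haβ⟩ := List.exists_cons_of_ne_nil haβne
  have hmem : ∀ x ∈ (c.reverse.takeWhile (· != 0)).reverse, x ≠ 0 := by
    intro x hx
    simpa using List.mem_takeWhile_imp (List.mem_reverse.mp hx)
  have ha : (c.reverse.takeWhile (· != 0)).reverse.headI ≠ 0 := by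
    rw [haβ]
    exact hmem a0 (haβ ▸ List.mem_cons_self (a := a0) (l := β0))
  have hd : c.reverse.dropWhile (· != 0) ≠ [] := by
    intro hdnil
    have hsall : c.all (· != 0) = true := by
      rw [List.all_eq_true]
      intro x hx
      have h2 := List.takeWhile_append_dropWhile (p := (· != 0)) (l := c.reverse)
      rw [hdnil, List.append_nil] at h2
      have hx2 : x ∈ c.reverse.takeWhile (· != 0) := by
        rw [h2]
        exact List.mem_reverse.mpr hx
      exact List.mem_takeWhile_imp (p := fun y => y != 0) hx2
    simp [hsall] at hall
  obtain ⟨d0, d', hdd⟩ := List.exists_cons_of_ne_nil hd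
  have hd0 : d0 = 0 := by
    have h2 := List.head?_dropWhile_not (· != 0) c.reverse
    rw [hdd] at h2
    simpa using h2
  refine ⟨ha, ?_⟩
  have h5 : c = (c.reverse.dropWhile (· != 0)).reverse ++ (c.reverse.takeWhile (· != 0)).reverse := by
    rw [← List.reverse_append, List.takeWhile_append_dropWhile, List.reverse_reverse]
  conv_lhs => rw [h5]
  rw [hdd, hd0, List.reverse_cons, List.dropLast_concat]
  rw [haβ]
  simp [List.append_assoc]

lemma stripZeros_head (l : List ℕ) :
    ∀ x, (stripZeros l).reverse.head? = some x → x ≠ 0 := by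
  intro x hx
  have h1 : (stripZeros l).reverse = l.reverse.dropWhile (· == 0) := by
    unfold stripZeros
    rw [List.reverse_reverse]
  rw [h1] at hx
  have h2 := List.head?_dropWhile_not (· == 0) l.reverse
  rw [hx] at h2
  simpa using h2

lemma Gaux_mem (n : ℕ) : ∀ fuel (l : List ℕ), IsTransdiagonalL l → Gaux n fuel l ∈ Jideal n := by
  intro fuel
  induction fuel with
  | zero =>
    intro l hl
    show Fqsym n (stripZeros l) ∈ Jideal n
    apply Fqsym_mem_Jideal
    rw [stripZeros_sum]
    exact transL_sum_pos l hl
  | succ fuel ih =>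
    intro l hl
    rw [show Gaux n (fuel + 1) l = _ from rfl]
    simp only [Gaux]
    by_cases hall : (stripZeros l).all (· != 0) = true
    · rw [if_pos hall]
      apply Fqsym_mem_Jideal
      rw [stripZeros_sum]
      exact transL_sum_pos l hl
    · rw [if_neg hall]
      have hall' : (stripZeros l).all (· != 0) = false := by
        rcases Bool.eq_false_or_eq_true ((stripZeros l).all (· != 0)) with h | h
        · exact absurd h hall
        · exact h
      obtain ⟨ha, hc⟩ := strip_decomp (stripZeros l) (stripZeros_head l) hall'
      obtain ⟨z0, hz0⟩ := stripZeros_decomp l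
      have htc : IsTransdiagonalL (stripZeros l) := by
        rw [← transL_append_replicate _ z0, ← hz0]
        exact hl
      rw [hc] at htc
      obtain ⟨ht1, ht2⟩ := trans_step _ _ _ ha htc
      have hshape : ∀ (a : ℕ) (w β : List ℕ) (m : ℕ),
          w ++ a :: (β ++ List.replicate m 0) = (w ++ a :: β) ++ List.replicate m 0 := by
        intro a w β m
        simp
      apply sub_mem
      · rw [hshape]
        apply ih
        rw [transL_append_replicate]
        exact ht1
      · apply Ideal.mul_mem_left
        rw [hshape]
        apply ih
        rw [transL_append_replicate]
        exact ht2

lemma sum_take_ofFn_filter {n : ℕ} (f : Fin n → ℕ) :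
    ∀ k, k ≤ n → (List.take k (List.ofFn f)).sum =
      ∑ i ∈ Finset.filter (fun i : Fin n => i.1 < k) Finset.univ, f i := by
  intro k
  induction k with
  | zero => intro _; simp
  | succ k ih =>
    intro hk
    rw [List.sum_take_succ _ k (by rw [List.length_ofFn]; omega), ih (by omega)]
    rw [List.getElem_ofFn]
    have hins : Finset.filter (fun i : Fin n => i.1 < k + 1) Finset.univ =
        insert (⟨k, by omega⟩ : Fin n) (Finset.filter (fun i : Fin n => i.1 < k) Finset.univ) := by
      ext x
      simp only [Finset.mem_filter, Finset.mem_insert, Finset.mem_univ, true_and]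
      constructor
      · intro hx
        by_cases hxk : x.1 = k
        · left; exact Fin.ext hxk
        · right; omega
      · rintro (rfl | hx)
        · exact Nat.lt_succ_self k
        · omega
    rw [hins, Finset.sum_insert (by simp)]
    omega

/-- for every transdiagonal `ε ∈ ℕ^n`, the polynomial `G_ε` lies in the
ideal `J_n`. -/
theorem Gpoly_mem_Jideal (n : ℕ) (hn : 1 ≤ n) (ε : Fin n →₀ ℕ)
    (hε : IsTransdiagonal ε) : Gpoly ε ∈ Jideal n := by
  unfold Gpoly
  apply Gaux_mem
  obtain ⟨j, hj⟩ := hε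
  refine ⟨j.1 + 1, by omega, by rw [List.length_ofFn]; omega, ?_⟩
  rw [sum_take_ofFn_filter (fun i => ε i) (j.1 + 1) (by omega)]
  have hIic : Finset.Iic j = Finset.filter (fun i : Fin n => i.1 < j.1 + 1) Finset.univ := by
    ext x
    simp only [Finset.mem_Iic, Finset.mem_filter, Finset.mem_univ, true_and, Fin.le_def]
    omega
  rw [hIic] at hj
  omega
end

section
/- For every n ≥ 1 and every 0 ≤ k ≤ n−1, the number of Dyck vectors ν ∈ ℕ^n with |ν| = k equals ((n−k)/(n+k))·binom(n+k, k); moreover there are no Dyck vectors ν ∈ ℕ^n with |ν| ≥ n. -/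
open MvPolynomial

/-!
Splitting off the last entry, a Dyck vector of length `n + 1` and size `k` is a Dyck vector
of length `n` and size `k - a` followed by any `a ≤ k`, provided `k ≤ n`. Hence the numbers
`d(n, k)` of Dyck vectors satisfy `d(n + 1, k) = ∑_{j ≤ k} d(n, j)`, i.e. the ballot recursion
`d(n + 1, k + 1) = d(n + 1, k) + d(n, k + 1)` for `k < n`, with `d(n, 0) = 1` and
`d(n + 1, n + 1) = 0`. The ballot numbers `(n - k)/(n + k) · C(n + k, k)` satisfy the same
recursion and boundary values.
-/

open Finset

def dyckTuples (n k : ℕ) : Finset (Fin n → ℕ) :=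
  {ν ∈ Nat.antidiagonalTuple n k | ∀ j : Fin n, ∑ i ∈ Iic j, ν i ≤ j}

theorem mem_dyckTuples {n k : ℕ} {ν : Fin n → ℕ} :
    ν ∈ dyckTuples n k ↔ (∀ j : Fin n, ∑ i ∈ Iic j, ν i ≤ j) ∧ ∑ i, ν i = k := by
  rw [dyckTuples, mem_filter, Nat.mem_antidiagonalTuple, and_comm]

theorem dyckTuples_zero_right (n : ℕ) : dyckTuples n 0 = {0} := by
  ext ν
  simp +contextual [dyckTuples, Nat.antidiagonalTuple_zero_right]

theorem snoc_mem_dyckTuples {n k a : ℕ} {μ : Fin n → ℕ} :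
    (Fin.snoc μ a : Fin (n + 1) → ℕ) ∈ dyckTuples (n + 1) k ↔
      μ ∈ dyckTuples n (k - a) ∧ a ≤ k ∧ k ≤ n := by
  simp only [mem_dyckTuples, Fin.forall_fin_succ', ← Fin.map_castSuccEmb_Iic, sum_map,
    show Iic (Fin.last n) = univ from Iic_top, Fin.sum_univ_castSucc, Fin.snoc_castSucc,
    Fin.snoc_last, Fin.coe_castSuccEmb, Fin.val_last, Fin.val_castSucc]
  constructor
  · rintro ⟨⟨hμ, hle⟩, hsum⟩
    exact ⟨⟨hμ, by omega⟩, by omega, by omega⟩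
  · rintro ⟨⟨hμ, hsum⟩, ha, hk⟩
    exact ⟨⟨hμ, by omega⟩, by omega⟩

theorem mem_dyckTuples_succ {n k : ℕ} {ν : Fin (n + 1) → ℕ} :
    ν ∈ dyckTuples (n + 1) k ↔
      Fin.init ν ∈ dyckTuples n (k - ν (Fin.last n)) ∧ ν (Fin.last n) ≤ k ∧ k ≤ n := by
  conv_lhs => rw [← Fin.snoc_init_self ν]
  exact snoc_mem_dyckTuples

theorem dyckTuples_succ_eq_empty {n k : ℕ} (hk : n < k) : dyckTuples (n + 1) k = ∅ :=
  eq_empty_of_forall_notMem fun _ hν => (mem_dyckTuples_succ.1 hν).2.2.not_gt hk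

theorem card_dyckTuples_succ {n k : ℕ} (hk : k ≤ n) :
    #(dyckTuples (n + 1) k) = ∑ j ∈ range (k + 1), #(dyckTuples n j) := by
  have hlast : (dyckTuples (n + 1) k : Set (Fin (n + 1) → ℕ)).MapsTo
      (fun ν => ν (Fin.last n)) (range (k + 1)) := fun ν hν => by
    simpa [Nat.lt_succ_iff] using (mem_dyckTuples_succ.1 hν).2.1
  rw [card_eq_sum_card_fiberwise hlast, ← sum_range_reflect (fun j => #(dyckTuples n j))]
  refine sum_congr rfl fun a ha => ?_
  rw [mem_range] at ha
  rw [add_tsub_cancel_right]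
  refine card_nbij' Fin.init (fun μ => Fin.snoc μ a) ?_ ?_ ?_ ?_
  · intro ν hν
    rw [mem_coe, mem_filter] at hν
    obtain ⟨hν, rfl⟩ := hν
    exact (mem_dyckTuples_succ.1 hν).1
  · intro μ hμ
    rw [mem_coe, mem_filter]
    exact ⟨snoc_mem_dyckTuples.2 ⟨hμ, by omega, hk⟩, Fin.snoc_last _ _⟩
  · intro ν hν
    rw [mem_coe, mem_filter] at hν
    rw [← hν.2]
    exact Fin.snoc_init_self ν
  · intro μ _
    exact Fin.init_snoc _ _

theorem card_dyckTuples_succ_succ {n k : ℕ} (hk : k + 1 ≤ n) :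
    #(dyckTuples (n + 1) (k + 1)) = #(dyckTuples (n + 1) k) + #(dyckTuples n (k + 1)) := by
  rw [card_dyckTuples_succ hk, card_dyckTuples_succ (by omega), sum_range_succ]

/-- `(n + k)` times the ballot number `(n - k)/(n + k) · C(n + k, k)`, kept integral. -/
def ballotNumerator (n k : ℕ) : ℤ := ((n : ℤ) - k) * (n + k).choose k

theorem ballotNumerator_succ_succ (n k : ℕ) :
    ((n : ℤ) + k + 1) * ballotNumerator (n + 1) (k + 1) =
      ((n : ℤ) + k + 2) * (ballotNumerator (n + 1) k + ballotNumerator n (k + 1)) := by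
  have hpascal : (n + 1 + (k + 1)).choose (k + 1) =
      (n + 1 + k).choose k + (n + 1 + k).choose (k + 1) := Nat.choose_succ_succ' _ _
  have hratio : ((n + 1 + k).choose (k + 1) : ℤ) * (k + 1) = (n + 1 + k).choose k * (n + 1) := by
    have := Nat.choose_succ_right_eq (n + 1 + k) k
    rw [show n + 1 + k - k = n + 1 by omega] at this
    exact_mod_cast this
  rw [ballotNumerator, ballotNumerator, ballotNumerator, hpascal,
    show n + (k + 1) = n + 1 + k by omega]
  push_cast
  linear_combination 2 * hratio

theorem add_mul_card_dyckTuples {n k : ℕ} (hk : k ≤ n) :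
    ((n : ℤ) + k) * #(dyckTuples n k) = ballotNumerator n k := by
  induction n generalizing k with
  | zero =>
    obtain rfl : k = 0 := by omega
    simp [ballotNumerator]
  | succ n ihn =>
    induction k with
    | zero => simp [dyckTuples_zero_right, ballotNumerator]
    | succ k ihk =>
      obtain rfl | hk : k = n ∨ k + 1 ≤ n := by omega
      · simp [dyckTuples_succ_eq_empty (Nat.lt_succ_self k), ballotNumerator]
      have h₁ := ihk (by omega)
      have h₂ := ihn hk
      refine mul_left_cancel₀ (a := (n : ℤ) + k + 1) (by positivity) ?_
      rw [ballotNumerator_succ_succ, card_dyckTuples_succ_succ hk]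
      push_cast at h₁ h₂ ⊢
      linear_combination ((n : ℤ) + k + 2) * (h₁ + h₂)

theorem IsDyck.sum_le {n : ℕ} {ν : Fin (n + 1) →₀ ℕ} (hν : IsDyck ν) : ∑ i, ν i ≤ n := by
  simpa [← Iic_top] using hν ⊤

/-- for `0 ≤ k ≤ n-1`, the number of Dyck vectors `ν ∈ ℕ^n` with
`|ν| = k` is `((n-k)/(n+k))·C(n+k,k)` (stated multiplicatively), and there are no Dyck
vectors of size `≥ n`. -/
theorem card_dyck_vectors_of_size (n k : ℕ) (hn : 1 ≤ n) :
    (k ≤ n - 1 →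
      {ν : Fin n →₀ ℕ | IsDyck ν ∧ ∑ i, ν i = k}.Finite ∧
        (n + k) * {ν : Fin n →₀ ℕ | IsDyck ν ∧ ∑ i, ν i = k}.ncard =
          (n - k) * (n + k).choose k) ∧
    (∀ ν : Fin n →₀ ℕ, IsDyck ν → ∑ i, ν i < n) := by
  have hset : {ν : Fin n →₀ ℕ | IsDyck ν ∧ ∑ i, ν i = k} =
      Finsupp.equivFunOnFinite ⁻¹' dyckTuples n k :=
    Set.ext fun _ => mem_dyckTuples.symm
  have hinj := Finsupp.equivFunOnFinite (α := Fin n) (M := ℕ).injective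
  refine ⟨fun hk => ⟨?_, ?_⟩, fun ν hν => ?_⟩
  · rw [hset]
    exact (dyckTuples n k).finite_toSet.preimage hinj.injOn
  · rw [hset, Set.ncard_preimage_of_injective_subset_range hinj (by simp),
      Set.ncard_coe_finset]
    zify [show k ≤ n by omega]
    exact add_mul_card_dyckTuples (by omega)
  · obtain ⟨m, rfl⟩ := Nat.exists_eq_add_of_le' hn
    exact Nat.lt_succ_of_le hν.sum_le
end
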